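/- Let A ∈ ℝ^{n×n}, B ∈ ℝ^{n×p}, r > 0. Define p(t) = e^{Ar} x(t) + ∫_{-r}^0 e^{-Aτ} B u(t+τ) dτ where x solves ẋ(t) = Ax(t) + Bu(t−r) for a continuous u. Then ṗ(t) = A p(t) + B u(t), i.e., the predictor state p satisfies the delay-free dynamics driven by the undelayed input. -/

import Mathlib

open Matrix intervalIntegral

/-!
Substituting `σ = t + τ` and using `e^{-Aτ} = e^{At} e^{-Aσ}` writes the predictor as
`p(t) = e^{Ar} x(t) + e^{At} ∫_{t-r}^t e^{-Aσ} B u(σ) dσ`. By the product rule and the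
fundamental theorem of calculus the second term has derivative
`A (e^{At} ∫ …) + B u(t) - e^{Ar} B u(t-r)`, and the last summand cancels the delayed input
in `e^{Ar} ẋ(t) = A e^{Ar} x(t) + e^{Ar} B u(t-r)`.
-/

open NormedSpace

section

variable {m : Type*} [Fintype m] [DecidableEq m]

theorem Matrix.exp_smul_mulVec_exp_smul_mulVec (A : Matrix m m ℝ) (s t : ℝ) (v : m → ℝ) :
    exp (s • A) *ᵥ (exp (t • A) *ᵥ v) = exp ((s + t) • A) *ᵥ v := by
  rw [mulVec_mulVec, add_smul,
    Matrix.exp_add_of_commute _ _ (((Commute.refl A).smul_left s).smul_right t)]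

theorem Matrix.exp_smul_mulVec_mulVec_comm (A : Matrix m m ℝ) (s : ℝ) (v : m → ℝ) :
    exp (s • A) *ᵥ (A *ᵥ v) = A *ᵥ (exp (s • A) *ᵥ v) := by
  rw [mulVec_mulVec, mulVec_mulVec, ((Commute.refl A).smul_right s).exp_right.eq]

end

section

attribute [local instance] Matrix.linftyOpNormedAddCommGroup Matrix.linftyOpNormedSpace
  Matrix.linftyOpNormedRing Matrix.linftyOpNormedAlgebra

variable {m n : Type*} [Fintype m] [Fintype n]

theorem HasDerivAt.matrix_mulVec {M : ℝ → Matrix m n ℝ} {v : ℝ → n → ℝ}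
    {M' : Matrix m n ℝ} {v' : n → ℝ} {t : ℝ} (hM : HasDerivAt M M' t) (hv : HasDerivAt v v' t) :
    HasDerivAt (fun s => M s *ᵥ v s) (M' *ᵥ v t + M t *ᵥ v') t := by
  let L : Matrix m n ℝ →L[ℝ] (n → ℝ) →L[ℝ] m → ℝ :=
    LinearMap.toContinuousLinearMap
      (LinearMap.toContinuousLinearMap.toLinearMap ∘ₗ mulVecBilin ℝ ℝ)
  exact (L.hasDerivAt_of_bilinear (fun _ => hM) fun _ => hv).congr_deriv (add_comm _ _)

variable [DecidableEq m]

theorem HasDerivAt.exp_smul_mulVec (A : Matrix m m ℝ) {v : ℝ → m → ℝ} {v' : m → ℝ} {t : ℝ}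
    (hv : HasDerivAt v v' t) :
    HasDerivAt (fun s => NormedSpace.exp (s • A) *ᵥ v s)
      (A *ᵥ (NormedSpace.exp (t • A) *ᵥ v t) + NormedSpace.exp (t • A) *ᵥ v') t := by
  rw [mulVec_mulVec]
  exact (hasDerivAt_exp_smul_const' A t).matrix_mulVec hv

theorem Matrix.continuous_exp_smul (A : Matrix m m ℝ) : Continuous fun s : ℝ => exp (s • A) :=
  (differentiable_exp_smul_const ℝ A).continuous

end

theorem Continuous.hasDerivAt_integral_sub_const {E : Type*} [NormedAddCommGroup E]
    [NormedSpace ℝ E] [CompleteSpace E] {f : ℝ → E} (hf : Continuous f) (r t : ℝ) :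
    HasDerivAt (fun s => ∫ σ in (s - r)..s, f σ) (f t - f (t - r)) t := by
  have hupper := (hf.integral_hasStrictDerivAt 0 t).hasDerivAt
  have hlower := ((hf.integral_hasStrictDerivAt 0 (t - r)).hasDerivAt).comp_sub_const t r
  refine (hupper.sub hlower).congr_of_eventuallyEq (Filter.Eventually.of_forall fun s => ?_)
  exact (integral_interval_sub_left (hf.intervalIntegrable _ _) (hf.intervalIntegrable _ _)).symm

theorem HasDerivAt.const_mulVec {m n : Type*} [Fintype m] [Fintype n] (M : Matrix m n ℝ)
    {v : ℝ → n → ℝ} {v' : n → ℝ} {t : ℝ} (hv : HasDerivAt v v' t) :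
    HasDerivAt (fun s => M *ᵥ v s) (M *ᵥ v') t :=
  (LinearMap.toContinuousLinearMap M.mulVecLin).hasFDerivAt.comp_hasDerivAt t hv

theorem intervalIntegral.integral_mulVec {m n : Type*} [Fintype m] [Fintype n]
    (M : Matrix m n ℝ) {f : ℝ → n → ℝ} {a b : ℝ}
    (hf : IntervalIntegrable f MeasureTheory.volume a b) :
    ∫ x in a..b, M *ᵥ f x = M *ᵥ ∫ x in a..b, f x :=
  (LinearMap.toContinuousLinearMap M.mulVecLin).intervalIntegral_comp_comm hf

theorem integral_exp_neg_smul_mulVec_comp_add {m : Type*} [Fintype m] [DecidableEq m]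
    (A : Matrix m m ℝ) {w : ℝ → m → ℝ} (hw : Continuous w) (a b s : ℝ) :
    ∫ τ in a..b, exp ((-τ) • A) *ᵥ w (s + τ) =
      exp (s • A) *ᵥ ∫ σ in (s + a)..(s + b), exp ((-σ) • A) *ᵥ w σ := by
  have hcont : Continuous fun σ => exp ((-σ) • A) *ᵥ w σ :=
    ((continuous_exp_smul A).comp continuous_neg).matrix_mulVec hw
  rw [← integral_mulVec _ (hcont.intervalIntegrable _ _), ← integral_comp_add_left]
  congr 1 with τ
  rw [exp_smul_mulVec_exp_smul_mulVec, neg_add, add_neg_cancel_left]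

theorem predictor_state_delay_free_general
    {n p : ℕ} (A : Matrix (Fin n) (Fin n) ℝ) (B : Matrix (Fin n) (Fin p) ℝ)
    (r : ℝ)
    (x : ℝ → Fin n → ℝ) (u : ℝ → Fin p → ℝ) (hu : Continuous u)
    (hx : ∀ t : ℝ, HasDerivAt x (A.mulVec (x t) + B.mulVec (u (t - r))) t) :
    ∀ t : ℝ, HasDerivAt
      (fun s : ℝ => (NormedSpace.exp (r • A)).mulVec (x s) +
        ∫ τ in (-r)..0, (NormedSpace.exp ((-τ) • A) * B).mulVec (u (s + τ)))
      (A.mulVec ((NormedSpace.exp (r • A)).mulVec (x t) +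
          ∫ τ in (-r)..0,
            (NormedSpace.exp ((-τ) • A) * B).mulVec (u (t + τ))) +
        B.mulVec (u t)) t := by
  intro t
  have hBu : Continuous fun σ => B *ᵥ u σ := continuous_const.matrix_mulVec hu
  set g : ℝ → Fin n → ℝ := fun σ => exp ((-σ) • A) *ᵥ (B *ᵥ u σ)
  have hg : Continuous g := ((continuous_exp_smul A).comp continuous_neg).matrix_mulVec hBu
  have hwindow : ∀ s, ∫ τ in (-r)..0, (exp ((-τ) • A) * B) *ᵥ u (s + τ) =
      exp (s • A) *ᵥ ∫ σ in (s - r)..s, g σ := fun s => by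
    simpa [g, ← mulVec_mulVec, sub_eq_add_neg] using
      integral_exp_neg_smul_mulVec_comp_add A hBu (-r) 0 s
  have hderiv := ((hx t).const_mulVec (exp (r • A))).add
    ((hg.hasDerivAt_integral_sub_const r t).exp_smul_mulVec A)
  have hinput : exp (t • A) *ᵥ g t = B *ᵥ u t := by
    simp only [g, exp_smul_mulVec_exp_smul_mulVec, add_neg_cancel, zero_smul, exp_zero, one_mulVec]
  have hdelayed : exp (t • A) *ᵥ g (t - r) = exp (r • A) *ᵥ (B *ᵥ u (t - r)) := by
    simp only [g, exp_smul_mulVec_exp_smul_mulVec, neg_sub, add_sub_cancel]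
  simp only [hwindow]
  refine hderiv.congr_deriv ?_
  rw [mulVec_sub, hinput, hdelayed, mulVec_add, mulVec_add, exp_smul_mulVec_mulVec_comm]
  abel

/-- Artstein's delay reduction: the predictor state
`p(t) = e^{Ar}x(t) + ∫_{-r}^0 e^{-Aτ}Bu(t+τ)dτ` satisfies the delay-free
dynamics `ṗ = Ap + Bu(t)` whenever `ẋ = Ax + Bu(t−r)` and `u` is continuous. -/
theorem predictor_state_delay_free
    {n p : ℕ} (A : Matrix (Fin n) (Fin n) ℝ) (B : Matrix (Fin n) (Fin p) ℝ)
    (r : ℝ) (hr : 0 < r)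
    (x : ℝ → Fin n → ℝ) (u : ℝ → Fin p → ℝ) (hu : Continuous u)
    (hx : ∀ t : ℝ, HasDerivAt x (A.mulVec (x t) + B.mulVec (u (t - r))) t) :
    ∀ t : ℝ, HasDerivAt
      (fun s : ℝ => (NormedSpace.exp (r • A)).mulVec (x s) +
        ∫ τ in (-r)..0, (NormedSpace.exp ((-τ) • A) * B).mulVec (u (s + τ)))
      (A.mulVec ((NormedSpace.exp (r • A)).mulVec (x t) +
          ∫ τ in (-r)..0,
            (NormedSpace.exp ((-τ) • A) * B).mulVec (u (t + τ))) +
        B.mulVec (u t)) t :=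
  predictor_state_delay_free_general A B r x u hu hx
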